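/- arXiv:2503.18676 — 5 statements merged into one kernel-verified Lean document; each statement's English description precedes it below -/
import Mathlib

section
/- If f : B^d → ℝ is τ-radial witnessed by g : [0,1] → ℝ (i.e., |f(x) - g(‖x‖²)| ≤ τ for all x ∈ B^d), and g is α-Lipschitz with coefficient c and tolerance ν on [0,1], then f is α-Lipschitz with coefficient 2^α d^{α/2} c and tolerance 2τ + ν on B^d; that is, there exists F ∈ Lip^{α, 2^α d^{α/2} c}(B^d) with max_{x ∈ B^d} |f(x) - F(x)| ≤ 2τ + ν. -/
open Set

theorem radial_lip_transfer (d : ℕ) (α c τ ν : ℝ)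
    (hα : 0 < α) (hα1 : α ≤ 1) (hc : 0 < c) (hτ : 0 ≤ τ) (hν : 0 < ν)
    (f : EuclideanSpace ℝ (Fin d) → ℝ) (g : ℝ → ℝ)
    (hradial : ∀ x : EuclideanSpace ℝ (Fin d), ‖x‖ ≤ 1 → |f x - g (‖x‖ ^ 2)| ≤ τ)
    (hg : ∃ gt : ℝ → ℝ,
      (∀ t ∈ Icc (0 : ℝ) 1, ∀ t' ∈ Icc (0 : ℝ) 1, |gt t - gt t'| ≤ c * |t - t'| ^ α) ∧
      (∀ t ∈ Icc (0 : ℝ) 1, |g t - gt t| ≤ ν)) :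
    ∃ F : EuclideanSpace ℝ (Fin d) → ℝ,
      (∀ x y : EuclideanSpace ℝ (Fin d), ‖x‖ ≤ 1 → ‖y‖ ≤ 1 →
        |F x - F y| ≤ (2 : ℝ) ^ α * (d : ℝ) ^ (α / 2) * c * ‖x - y‖ ^ α) ∧
      (∀ x : EuclideanSpace ℝ (Fin d), ‖x‖ ≤ 1 → |f x - F x| ≤ 2 * τ + ν) := by
  obtain ⟨gt, hgt, hgν⟩ := hg
  refine ⟨fun x => gt (‖x‖ ^ 2), ?_, ?_⟩
  · intro x y hx hy
    have hmem : ∀ z : EuclideanSpace ℝ (Fin d), ‖z‖ ≤ 1 → ‖z‖ ^ 2 ∈ Icc (0 : ℝ) 1 := by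
      intro z hz
      constructor
      · positivity
      · calc ‖z‖ ^ 2 ≤ 1 ^ 2 := by gcongr
          _ = 1 := one_pow 2
    rcases Nat.eq_zero_or_pos d with hd | hd
    · subst hd
      have : x = y := Subsingleton.elim x y
      subst this
      simp only [sub_self, abs_zero]
      positivity
    · have h1 : |gt (‖x‖ ^ 2) - gt (‖y‖ ^ 2)| ≤ c * |‖x‖ ^ 2 - ‖y‖ ^ 2| ^ α :=
        hgt _ (hmem x hx) _ (hmem y hy)
      have h2 : |‖x‖ ^ 2 - ‖y‖ ^ 2| ≤ 2 * ‖x - y‖ := by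
        have : ‖x‖ ^ 2 - ‖y‖ ^ 2 = (‖x‖ - ‖y‖) * (‖x‖ + ‖y‖) := by ring
        rw [this, abs_mul]
        have h3 : |‖x‖ - ‖y‖| ≤ ‖x - y‖ := abs_norm_sub_norm_le x y
        have h4 : |‖x‖ + ‖y‖| ≤ 2 := by
          rw [abs_of_nonneg (by positivity)]
          linarith
        calc |‖x‖ - ‖y‖| * |‖x‖ + ‖y‖| ≤ ‖x - y‖ * 2 := by
              apply mul_le_mul h3 h4 (abs_nonneg _) (norm_nonneg _)
          _ = 2 * ‖x - y‖ := by ring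
      have h5 : |‖x‖ ^ 2 - ‖y‖ ^ 2| ^ α ≤ (2 * ‖x - y‖) ^ α :=
        Real.rpow_le_rpow (abs_nonneg _) h2 hα.le
      have h6 : (2 * ‖x - y‖) ^ α = 2 ^ α * ‖x - y‖ ^ α :=
        Real.mul_rpow (by norm_num) (norm_nonneg _)
      have h7 : (1 : ℝ) ≤ (d : ℝ) ^ (α / 2) :=
        Real.one_le_rpow (by exact_mod_cast hd) (by positivity)
      calc |gt (‖x‖ ^ 2) - gt (‖y‖ ^ 2)| ≤ c * |‖x‖ ^ 2 - ‖y‖ ^ 2| ^ α := h1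
        _ ≤ c * (2 ^ α * ‖x - y‖ ^ α) := by
            rw [← h6]; exact mul_le_mul_of_nonneg_left h5 hc.le
        _ = 2 ^ α * 1 * c * ‖x - y‖ ^ α := by ring
        _ ≤ 2 ^ α * (d : ℝ) ^ (α / 2) * c * ‖x - y‖ ^ α := by
            have : (0:ℝ) < 2 ^ α := Real.rpow_pos_of_pos (by norm_num) α
            gcongr
  · intro x hx
    have hm : ‖x‖ ^ 2 ∈ Icc (0 : ℝ) 1 := by
      constructor
      · positivity
      · calc ‖x‖ ^ 2 ≤ 1 ^ 2 := by gcongr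
          _ = 1 := one_pow 2
    calc |f x - gt (‖x‖ ^ 2)|
        ≤ |f x - g (‖x‖ ^ 2)| + |g (‖x‖ ^ 2) - gt (‖x‖ ^ 2)| := abs_sub_le _ _ _
      _ ≤ τ + ν := add_le_add (hradial x hx) (hgν _ hm)
      _ ≤ 2 * τ + ν := by linarith
end

section
/- Let φ(t) = (σ(t+1) - σ(t-1))/2 with σ(t) = 1/(1+e^{-t}). Then for all t ∈ ℝ, φ(t) ≤ ((e² - 1)/(2e)) · e^{-|t|}. -/
noncomputable def sigmoid (t : ℝ) : ℝ := 1 / (1 + Real.exp (-t))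

noncomputable def phi (t : ℝ) : ℝ := (sigmoid (t + 1) - sigmoid (t - 1)) / 2

lemma phi_even (t : ℝ) : phi (-t) = phi t := by
  unfold phi sigmoid
  have h1 : Real.exp (-(-t + 1)) = Real.exp t / Real.exp 1 := by
    rw [show -(-t+1) = t - 1 by ring, Real.exp_sub]
  have h2 : Real.exp (-(-t - 1)) = Real.exp t * Real.exp 1 := by
    rw [show -(-t-1) = t + 1 by ring, Real.exp_add]
  have h3 : Real.exp (-(t + 1)) = 1 / (Real.exp t * Real.exp 1) := by
    rw [show -(t+1) = -t + -1 by ring, Real.exp_add, Real.exp_neg, Real.exp_neg]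
    ring
  have h4 : Real.exp (-(t - 1)) = Real.exp 1 / Real.exp t := by
    rw [show -(t-1) = 1 - t by ring, Real.exp_sub]
  rw [h1, h2, h3, h4]
  have hu : Real.exp t > 0 := Real.exp_pos t
  have hE : Real.exp 1 > 0 := Real.exp_pos 1
  have d1 : 1 + Real.exp t / Real.exp 1 > 0 := by positivity
  have d2 : 1 + Real.exp t * Real.exp 1 > 0 := by positivity
  have d3 : 1 + 1 / (Real.exp t * Real.exp 1) > 0 := by positivity
  have d4 : 1 + Real.exp 1 / Real.exp t > 0 := by positivity
  field_simp
  ring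

lemma phi_le (t : ℝ) : phi t ≤ (Real.exp 1 ^ 2 - 1) / (2 * Real.exp 1) * Real.exp (-t) := by
  unfold phi sigmoid
  have h3 : Real.exp (-(t + 1)) = Real.exp (-t) / Real.exp 1 := by
    rw [show -(t+1) = -t - 1 by ring, Real.exp_sub]
  have h4 : Real.exp (-(t - 1)) = Real.exp (-t) * Real.exp 1 := by
    rw [show -(t-1) = -t + 1 by ring, Real.exp_add]
  rw [h3, h4]
  have hv : Real.exp (-t) > 0 := Real.exp_pos _
  have hE : Real.exp 1 > 1 := by
    have := Real.add_one_lt_exp (x := 1) one_ne_zero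
    linarith
  have d1 : 1 + Real.exp (-t) / Real.exp 1 > 0 := by positivity
  have d2 : 1 + Real.exp (-t) * Real.exp 1 > 0 := by positivity
  rw [div_sub_div _ _ (ne_of_gt d1) (ne_of_gt d2), div_div, div_le_iff₀ (by positivity),
    div_mul_eq_mul_div, div_mul_eq_mul_div, le_div_iff₀ (by positivity)]
  set v := Real.exp (-t)
  set E := Real.exp 1
  have key : (1 + v * E) - (1 + v / E) = (E^2 - 1) / E * v := by
    field_simp; ring
  have hfac : (1 + v / E) * (1 + v * E) ≥ 1 := by nlinarith [div_pos hv (by linarith : (0:ℝ) < E)]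
  have hve : v / E * E = v := div_mul_cancel₀ v (by linarith)
  nlinarith [mul_nonneg (mul_nonneg hv.le (by nlinarith : (0:ℝ) ≤ E^2 - 1))
      (by linarith : (0:ℝ) ≤ (1 + v/E) * (1 + v*E) - 1), hve]

theorem phi_decay (t : ℝ) :
    phi t ≤ (Real.exp 1 ^ 2 - 1) / (2 * Real.exp 1) * Real.exp (-|t|) := by
  rcases abs_cases t with ⟨h, _⟩ | ⟨h, _⟩
  · rw [h]; exact phi_le t
  · rw [h, neg_neg, ← phi_even t]
    simpa using phi_le (-t)
end

section
/- Let φ(t) = (σ(t+1) - σ(t-1))/2 with σ(t) = 1/(1+e^{-t}). Then the derivative satisfies |φ'(t)| ≤ ((e² - 1)/(2e)) · e^{-|t|} for all t ∈ ℝ. -/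
lemma hasDerivAt_sigmoid (s : ℝ) :
    HasDerivAt sigmoid (Real.exp (-s) / (1 + Real.exp (-s)) ^ 2) s := by
  have h1 : HasDerivAt (fun s : ℝ => 1 + Real.exp (-s)) (-Real.exp (-s)) s := by
    simpa using ((Real.hasDerivAt_exp (-s)).comp s (hasDerivAt_neg s)).const_add 1
  have hne : (1 : ℝ) + Real.exp (-s) ≠ 0 := by positivity
  have h2 := h1.inv hne
  unfold sigmoid
  rw [show (fun t : ℝ => 1 / (1 + Real.exp (-t))) = (fun s : ℝ => 1 + Real.exp (-s))⁻¹ from by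
    funext x; simp [one_div]]
  simpa [one_div] using h2

lemma hasDerivAt_phi (t : ℝ) :
    HasDerivAt phi ((Real.exp (-(t + 1)) / (1 + Real.exp (-(t + 1))) ^ 2
      - Real.exp (-(t - 1)) / (1 + Real.exp (-(t - 1))) ^ 2) / 2) t := by
  have h1 : HasDerivAt (fun t : ℝ => sigmoid (t + 1))
      (Real.exp (-(t + 1)) / (1 + Real.exp (-(t + 1))) ^ 2) t := by
    simpa [Function.comp_def] using (hasDerivAt_sigmoid (t + 1)).comp t ((hasDerivAt_id t).add_const 1)
  have h2 : HasDerivAt (fun t : ℝ => sigmoid (t - 1))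
      (Real.exp (-(t - 1)) / (1 + Real.exp (-(t - 1))) ^ 2) t := by
    simpa [Function.comp_def] using (hasDerivAt_sigmoid (t - 1)).comp t ((hasDerivAt_id t).sub_const 1)
  unfold phi
  simpa [phi] using (h1.sub h2).div_const 2

lemma phi_deriv_aux (u E m : ℝ) (hu : 0 < u) (hE : 2 ≤ E)
    (hm : (m = u ∧ u ≤ 1) ∨ (m = 1 / u ∧ 1 ≤ u)) :
    |(u / E / (1 + u / E) ^ 2 - u * E / (1 + u * E) ^ 2) / 2|
      ≤ (E ^ 2 - 1) / (2 * E) * m := by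
  have hEpos : (0 : ℝ) < E := by linarith
  set a := u / E with hadef
  set b := u * E with hbdef
  have hapos : 0 < a := by positivity
  have hbpos : 0 < b := by positivity
  have hne1 : (1 + a) ≠ 0 := by positivity
  have hne2 : (1 + b) ≠ 0 := by positivity
  have hD : (0 : ℝ) < (1 + a) ^ 2 * (1 + b) ^ 2 := by positivity
  have hid : a / (1 + a) ^ 2 - b / (1 + b) ^ 2
      = (a - b) * (1 - a * b) / ((1 + a) ^ 2 * (1 + b) ^ 2) := by
    field_simp
    ring
  have hab : a * b = u ^ 2 := by
    rw [hadef, hbdef]; field_simp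
  have habs1 : |a - b| = u * (E ^ 2 - 1) / E := by
    rw [abs_sub_comm, abs_of_nonneg]
    · rw [hadef, hbdef]; field_simp
    · have : a ≤ b := by
        rw [hadef, hbdef, div_le_iff₀ hEpos]
        nlinarith
      linarith
  have hkey : u * |1 - u ^ 2| ≤ m * ((1 + a) ^ 2 * (1 + b) ^ 2) := by
    rcases hm with ⟨hm, hu1⟩ | ⟨hm, hu1⟩
    · have h2 : |1 - u ^ 2| = 1 - u ^ 2 := abs_of_nonneg (by nlinarith)
      have hD1 : 1 ≤ (1 + a) ^ 2 * (1 + b) ^ 2 := by nlinarith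
      rw [hm, h2]
      nlinarith
    · have h2 : |1 - u ^ 2| = u ^ 2 - 1 := by
        rw [abs_sub_comm]; exact abs_of_nonneg (by nlinarith)
      rw [hm, h2, one_div, inv_mul_eq_div, le_div_iff₀ hu]
      have hDab : u ^ 2 ≤ (1 + a) * (1 + b) := by nlinarith
      have h4 := mul_self_le_mul_self (by positivity : (0:ℝ) ≤ u ^ 2) hDab
      nlinarith [sq_nonneg u]
  have hmpos : 0 < m := by
    rcases hm with ⟨hm, _⟩ | ⟨hm, _⟩ <;> rw [hm] <;> positivity
  rw [hid, abs_div, abs_div, abs_mul, habs1, hab, abs_of_pos hD, abs_two, div_div,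
    div_le_iff₀ (by positivity : (0:ℝ) < (1 + a) ^ 2 * (1 + b) ^ 2 * 2)]
  have hE1 : (0 : ℝ) < E ^ 2 - 1 := by nlinarith
  calc u * (E ^ 2 - 1) / E * |1 - u ^ 2|
      = (E ^ 2 - 1) / E * (u * |1 - u ^ 2|) := by ring
    _ ≤ (E ^ 2 - 1) / E * (m * ((1 + a) ^ 2 * (1 + b) ^ 2)) := by
        apply mul_le_mul_of_nonneg_left hkey (by positivity)
    _ = (E ^ 2 - 1) / (2 * E) * m * ((1 + a) ^ 2 * (1 + b) ^ 2 * 2) := by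
        field_simp

theorem phi_deriv_decay (t : ℝ) :
    |deriv phi t| ≤ (Real.exp 1 ^ 2 - 1) / (2 * Real.exp 1) * Real.exp (-|t|) := by
  have hE : 2 ≤ Real.exp 1 := by
    have := Real.add_one_le_exp (1 : ℝ); linarith
  have hu : 0 < Real.exp (-t) := Real.exp_pos _
  have ha : Real.exp (-(t + 1)) = Real.exp (-t) / Real.exp 1 := by
    rw [← Real.exp_sub]; ring_nf
  have hb : Real.exp (-(t - 1)) = Real.exp (-t) * Real.exp 1 := by
    rw [← Real.exp_add]; ring_nf
  have hderiv : deriv phi t = (Real.exp (-t) / Real.exp 1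
      / (1 + Real.exp (-t) / Real.exp 1) ^ 2
      - Real.exp (-t) * Real.exp 1 / (1 + Real.exp (-t) * Real.exp 1) ^ 2) / 2 := by
    rw [(hasDerivAt_phi t).deriv, ha, hb]
  rw [hderiv]
  apply phi_deriv_aux _ _ _ hu hE
  rcases le_or_gt 0 t with ht | ht
  · left
    constructor
    · rw [abs_of_nonneg ht]
    · exact Real.exp_le_one_iff.mpr (by linarith)
  · right
    constructor
    · rw [abs_of_neg ht, neg_neg, one_div, ← Real.exp_neg, neg_neg]
    · exact Real.one_le_exp (by linarith)
end

section
/- (Equivalence of the modified K-functional.) For g* ∈ L^∞([-1,1]) and h₁, h₂ > 0, define K̃(g*, h₁, h₂) = inf over differentiable g of (‖g*-g‖_∞ + h₁‖g'‖_∞ + h₂‖g‖_∞), and K(g*, h₁) = inf over g of (‖g*-g‖_∞ + h₁‖g'‖_∞). Then (1/2)(min(1,h₂)‖g*‖_∞ + K(g*,h₁)) ≤ K̃(g*, h₁, h₂) ≤ 2(min(1,h₂)‖g*‖_∞ + K(g*,h₁)). -/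
open Set

/-- Sup norm on `[-1,1]`. -/
noncomputable def supNorm (g : ℝ → ℝ) : ℝ :=
  sSup {v : ℝ | ∃ x ∈ Icc (-1 : ℝ) 1, v = |g x|}

/-- K-functional on `[-1,1]`. -/
noncomputable def Kfun (g : ℝ → ℝ) (h : ℝ) : ℝ :=
  sInf {v : ℝ | ∃ G : ℝ → ℝ, DifferentiableOn ℝ G (Icc (-1 : ℝ) 1) ∧
    BddAbove {w : ℝ | ∃ x ∈ Icc (-1 : ℝ) 1, w = |deriv G x|} ∧
    v = supNorm (fun x => g x - G x) + h * supNorm (deriv G)}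

/-- Modified K-functional on `[-1,1]`. -/
noncomputable def Ktilde (g : ℝ → ℝ) (h₁ h₂ : ℝ) : ℝ :=
  sInf {v : ℝ | ∃ G : ℝ → ℝ, DifferentiableOn ℝ G (Icc (-1 : ℝ) 1) ∧
    BddAbove {w : ℝ | ∃ x ∈ Icc (-1 : ℝ) 1, w = |deriv G x|} ∧
    v = supNorm (fun x => g x - G x) + h₁ * supNorm (deriv G) + h₂ * supNorm G}

lemma supNorm_nonneg (f : ℝ → ℝ) : 0 ≤ supNorm f :=
  Real.sSup_nonneg (by rintro v ⟨x, hx, rfl⟩; exact abs_nonneg _)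

lemma abs_le_supNorm (f : ℝ → ℝ) (hb : BddAbove {v : ℝ | ∃ x ∈ Icc (-1:ℝ) 1, v = |f x|})
    {x : ℝ} (hx : x ∈ Icc (-1:ℝ) 1) : |f x| ≤ supNorm f :=
  le_csSup hb ⟨x, hx, rfl⟩

lemma supNorm_le (f : ℝ → ℝ) {C : ℝ} (hC : 0 ≤ C)
    (h : ∀ x ∈ Icc (-1:ℝ) 1, |f x| ≤ C) : supNorm f ≤ C :=
  Real.sSup_le (by rintro v ⟨x, hx, rfl⟩; exact h x hx) hC

lemma bddAbove_of_continuousOn (f : ℝ → ℝ) (hf : ContinuousOn f (Icc (-1:ℝ) 1)) :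
    BddAbove {v : ℝ | ∃ x ∈ Icc (-1:ℝ) 1, v = |f x|} := by
  have he : {v : ℝ | ∃ x ∈ Icc (-1:ℝ) 1, v = |f x|} = (fun x => |f x|) '' Icc (-1) 1 := by
    ext v
    constructor
    · rintro ⟨x, hx, rfl⟩; exact ⟨x, hx, rfl⟩
    · rintro ⟨x, hx, rfl⟩; exact ⟨x, hx, rfl⟩
  rw [he]
  exact (isCompact_Icc.image_of_continuousOn hf.abs).bddAbove

lemma bddAbove_sub (g G : ℝ → ℝ)
    (hg : BddAbove {v : ℝ | ∃ x ∈ Icc (-1:ℝ) 1, v = |g x|})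
    (hG : ContinuousOn G (Icc (-1:ℝ) 1)) :
    BddAbove {v : ℝ | ∃ x ∈ Icc (-1:ℝ) 1, v = |g x - G x|} := by
  obtain ⟨Cg, hCg⟩ := hg
  refine ⟨Cg + supNorm G, ?_⟩
  rintro v ⟨x, hx, rfl⟩
  have h1 : |g x| ≤ Cg := hCg ⟨x, hx, rfl⟩
  have h2 : |G x| ≤ supNorm G := abs_le_supNorm G (bddAbove_of_continuousOn G hG) hx
  have h3 : |g x - G x| ≤ |g x| + |G x| := abs_sub (g x) (G x)
  linarith

lemma supNorm_zero : supNorm (fun _ : ℝ => (0:ℝ)) = 0 := by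
  refine le_antisymm (supNorm_le _ le_rfl ?_) (supNorm_nonneg _)
  intro x _; simp

theorem Ktilde_equiv (g : ℝ → ℝ)
    (hg : BddAbove {v : ℝ | ∃ x ∈ Icc (-1 : ℝ) 1, v = |g x|})
    (h₁ h₂ : ℝ) (hh₁ : 0 < h₁) (hh₂ : 0 < h₂) :
    (1 / 2) * (min 1 h₂ * supNorm g + Kfun g h₁) ≤ Ktilde g h₁ h₂ ∧
    Ktilde g h₁ h₂ ≤ 2 * (min 1 h₂ * supNorm g + Kfun g h₁) := by
  set m := min 1 h₂ with hm
  set N := supNorm g with hN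
  have hm0 : 0 ≤ m := le_min zero_le_one hh₂.le
  have hm1 : m ≤ 1 := min_le_left _ _
  have hm2 : m ≤ h₂ := min_le_right _ _
  have hN0 : 0 ≤ N := supNorm_nonneg g
  -- the zero function as a witness
  have hzero_diff : DifferentiableOn ℝ (fun _ : ℝ => (0:ℝ)) (Icc (-1:ℝ) 1) :=
    differentiableOn_const 0
  have hzero_deriv : deriv (fun _ : ℝ => (0:ℝ)) = (fun _ : ℝ => (0:ℝ)) := by
    funext x; exact deriv_const x 0
  have hzero_bdd : BddAbove {w : ℝ | ∃ x ∈ Icc (-1:ℝ) 1, w = |deriv (fun _ : ℝ => (0:ℝ)) x|} := by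
    refine ⟨0, ?_⟩
    rintro w ⟨x, hx, rfl⟩
    rw [hzero_deriv]
    simp
  have hsub_zero : (fun x => g x - (fun _ : ℝ => (0:ℝ)) x) = g := by funext x; simp
  have hNmemS : N ∈ {v : ℝ | ∃ G : ℝ → ℝ, DifferentiableOn ℝ G (Icc (-1 : ℝ) 1) ∧
      BddAbove {w : ℝ | ∃ x ∈ Icc (-1 : ℝ) 1, w = |deriv G x|} ∧
      v = supNorm (fun x => g x - G x) + h₁ * supNorm (deriv G)} := by
    refine ⟨fun _ => 0, hzero_diff, hzero_bdd, ?_⟩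
    rw [hsub_zero, hzero_deriv, supNorm_zero]
    ring
  have hNmemT : N ∈ {v : ℝ | ∃ G : ℝ → ℝ, DifferentiableOn ℝ G (Icc (-1 : ℝ) 1) ∧
      BddAbove {w : ℝ | ∃ x ∈ Icc (-1 : ℝ) 1, w = |deriv G x|} ∧
      v = supNorm (fun x => g x - G x) + h₁ * supNorm (deriv G) + h₂ * supNorm G} := by
    refine ⟨fun _ => 0, hzero_diff, hzero_bdd, ?_⟩
    rw [hsub_zero, hzero_deriv, supNorm_zero]
    ring
  have hS_bdd : BddBelow {v : ℝ | ∃ G : ℝ → ℝ, DifferentiableOn ℝ G (Icc (-1 : ℝ) 1) ∧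
      BddAbove {w : ℝ | ∃ x ∈ Icc (-1 : ℝ) 1, w = |deriv G x|} ∧
      v = supNorm (fun x => g x - G x) + h₁ * supNorm (deriv G)} := by
    refine ⟨0, ?_⟩
    rintro v ⟨G, _, _, rfl⟩
    have := supNorm_nonneg (fun x => g x - G x)
    have := supNorm_nonneg (deriv G)
    nlinarith
  have hT_bdd : BddBelow {v : ℝ | ∃ G : ℝ → ℝ, DifferentiableOn ℝ G (Icc (-1 : ℝ) 1) ∧
      BddAbove {w : ℝ | ∃ x ∈ Icc (-1 : ℝ) 1, w = |deriv G x|} ∧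
      v = supNorm (fun x => g x - G x) + h₁ * supNorm (deriv G) + h₂ * supNorm G} := by
    refine ⟨0, ?_⟩
    rintro v ⟨G, _, _, rfl⟩
    have := supNorm_nonneg (fun x => g x - G x)
    have := supNorm_nonneg (deriv G)
    have := supNorm_nonneg G
    nlinarith
  have hK0 : 0 ≤ Kfun g h₁ := Real.sInf_nonneg (by
    rintro v ⟨G, _, _, rfl⟩
    have := supNorm_nonneg (fun x => g x - G x)
    have := supNorm_nonneg (deriv G)
    nlinarith)
  constructor
  · -- lower bound
    rw [Ktilde]
    refine le_csInf ⟨N, hNmemT⟩ ?_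
    rintro v ⟨G, hGd, hGb, rfl⟩
    have hGc : ContinuousOn G (Icc (-1:ℝ) 1) := hGd.continuousOn
    have hGbb := bddAbove_of_continuousOn G hGc
    have hsbb := bddAbove_sub g G hg hGc
    set A := supNorm (fun x => g x - G x) with hA
    set B := supNorm (deriv G) with hB
    set C := supNorm G with hC
    have hA0 : 0 ≤ A := supNorm_nonneg _
    have hB0 : 0 ≤ B := supNorm_nonneg _
    have hC0 : 0 ≤ C := supNorm_nonneg _
    have hKle : Kfun g h₁ ≤ A + h₁ * B := csInf_le hS_bdd ⟨G, hGd, hGb, rfl⟩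
    have hNle : N ≤ A + C := by
      refine Real.sSup_le ?_ (by linarith)
      rintro v ⟨x, hx, rfl⟩
      have h1 : |g x - G x| ≤ A := abs_le_supNorm _ hsbb hx
      have h2 : |G x| ≤ C := abs_le_supNorm _ hGbb hx
      have h3 : |g x| ≤ |g x - G x| + |G x| := by
        have := abs_add_le (g x - G x) (G x)
        simpa using this
      linarith
    have hmN : m * N ≤ A + h₂ * C := by
      have t1 : m * N ≤ m * (A + C) := mul_le_mul_of_nonneg_left hNle hm0
      have t2 : m * A ≤ 1 * A := mul_le_mul_of_nonneg_right hm1 hA0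
      have t3 : m * C ≤ h₂ * C := mul_le_mul_of_nonneg_right hm2 hC0
      nlinarith
    nlinarith [mul_nonneg hh₁.le hB0, mul_nonneg hh₂.le hC0]
  · -- upper bound
    rcases le_or_gt h₂ 1 with hc | hc
    · have hmeq : m = h₂ := min_eq_right hc
      have key : (Ktilde g h₁ h₂ - 2 * h₂ * N) / 2 ≤ Kfun g h₁ := by
        refine le_csInf ⟨N, hNmemS⟩ ?_
        rintro v ⟨G, hGd, hGb, rfl⟩
        have hGc : ContinuousOn G (Icc (-1:ℝ) 1) := hGd.continuousOn
        have hGbb := bddAbove_of_continuousOn G hGc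
        have hsbb := bddAbove_sub g G hg hGc
        set A := supNorm (fun x => g x - G x) with hA
        set B := supNorm (deriv G) with hB
        set C := supNorm G with hC
        have hA0 : 0 ≤ A := supNorm_nonneg _
        have hB0 : 0 ≤ B := supNorm_nonneg _
        have hTle : Ktilde g h₁ h₂ ≤ A + h₁ * B + h₂ * C :=
          csInf_le hT_bdd ⟨G, hGd, hGb, rfl⟩
        have hCle : C ≤ N + A := by
          refine supNorm_le _ (by linarith) ?_
          intro x hx
          have h1 : |g x - G x| ≤ A := abs_le_supNorm _ hsbb hx
          have h2 : |g x| ≤ N := abs_le_supNorm _ hg hx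
          have h3 : |G x| ≤ |g x| + |g x - G x| := by
            have := abs_sub (G x) (g x - G x)
            have h4 : |G x - (g x - G x) + (g x - G x)| ≤ |G x - (g x - G x)| + |g x - G x| :=
              abs_add_le _ _
            have h5 : |g x| = |g x - G x + G x| := by ring_nf
            calc |G x| = |g x - (g x - G x)| := by ring_nf
              _ ≤ |g x| + |g x - G x| := abs_sub _ _
          linarith
        have t1 : h₂ * C ≤ h₂ * (N + A) := mul_le_mul_of_nonneg_left hCle hh₂.le
        have t2 : h₂ * A ≤ 1 * A := mul_le_mul_of_nonneg_right hc hA0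
        nlinarith [mul_nonneg hh₁.le hB0]
      rw [hmeq]
      linarith
    · have hmeq : m = 1 := min_eq_left hc.le
      have hTle : Ktilde g h₁ h₂ ≤ N := csInf_le hT_bdd hNmemT
      rw [hmeq]
      nlinarith
end

section
/- Let φ(t) = (σ(t+1)-σ(t-1))/2 with σ the logistic sigmoid. For n ∈ ℕ₊ and any t ∈ [-1,1], the tail sum satisfies ∑_{|i| ≥ 2n+1} φ(nt - i) ≤ 3 e^{-n}. -/
open Set

noncomputable def Cphi : ℝ := (Real.exp 1 - Real.exp (-1)) / 2

lemma sigmoid_mono : Monotone sigmoid := by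
  intro a b hab
  unfold sigmoid
  have h1 : (0:ℝ) < 1 + Real.exp (-b) := by positivity
  apply one_div_le_one_div_of_le h1
  have := Real.exp_le_exp.mpr (neg_le_neg hab)
  linarith

lemma phi_nonneg (u : ℝ) : 0 ≤ phi u := by
  have := sigmoid_mono (show u - 1 ≤ u + 1 by linarith)
  unfold phi
  linarith

lemma phi_eq (u : ℝ) : phi u = (Real.exp (-u) * (Real.exp 1 - Real.exp (-1))) /
    (2 * (1 + Real.exp (-u) * Real.exp (-1)) * (1 + Real.exp (-u) * Real.exp 1)) := by
  unfold phi sigmoid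
  have e1 : Real.exp (-(u+1)) = Real.exp (-u) * Real.exp (-1) := by
    rw [← Real.exp_add]; ring_nf
  have e2 : Real.exp (-(u-1)) = Real.exp (-u) * Real.exp 1 := by
    rw [← Real.exp_add]; ring_nf
  rw [e1, e2]
  have h1 : (0:ℝ) < 1 + Real.exp (-u) * Real.exp (-1) := by positivity
  have h2 : (0:ℝ) < 1 + Real.exp (-u) * Real.exp 1 := by positivity
  field_simp
  ring

lemma Cphi_pos : 0 < Cphi := by
  unfold Cphi
  have := Real.exp_lt_exp.mpr (show (-1:ℝ) < 1 by norm_num)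
  linarith

lemma phi_le_abs (u : ℝ) : phi u ≤ Cphi * Real.exp (-|u|) := by
  rw [phi_eq]
  set x := Real.exp (-u) with hx
  have hxpos : 0 < x := Real.exp_pos _
  have hE : (0:ℝ) < Real.exp 1 := Real.exp_pos _
  have hE' : (0:ℝ) < Real.exp (-1) := Real.exp_pos _
  have hEE : Real.exp 1 * Real.exp (-1) = 1 := by
    rw [← Real.exp_add]; norm_num
  have hEle : Real.exp (-1) ≤ Real.exp 1 := Real.exp_le_exp.mpr (by norm_num)
  have h1 : (0:ℝ) < 1 + x * Real.exp (-1) := by positivity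
  have h2 : (0:ℝ) < 1 + x * Real.exp 1 := by positivity
  rcases le_or_gt 0 u with hu | hu
  · rw [abs_of_nonneg hu, ← hx, div_le_iff₀ (by positivity)]
    unfold Cphi
    nlinarith [mul_pos hxpos hE, mul_pos hxpos hE',
      mul_nonneg (mul_nonneg hxpos.le hE'.le) (mul_nonneg hxpos.le hE.le),
      mul_nonneg (sub_nonneg.mpr hEle) hxpos.le]
  · rw [abs_of_neg hu]
    have hxinv : Real.exp (- -u) = x⁻¹ := by
      rw [neg_neg, hx, ← Real.exp_neg, neg_neg]
    rw [hxinv]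
    have hrw : Cphi * x⁻¹ = Cphi / x := by rw [div_eq_mul_inv]
    rw [hrw, div_le_div_iff₀ (by positivity) hxpos]
    unfold Cphi
    have hprod : x * Real.exp (-1) * (x * Real.exp 1) = x * x := by
      calc x * Real.exp (-1) * (x * Real.exp 1) = x * x * (Real.exp 1 * Real.exp (-1)) := by ring
        _ = x * x := by rw [hEE, mul_one]
    nlinarith [hprod, mul_nonneg (sub_nonneg.mpr hEle)
        (mul_nonneg hxpos.le (add_pos hE hE').le),
      sub_nonneg.mpr hEle]

theorem phi_tail_sum (n : ℕ) (hn : 1 ≤ n) (t : ℝ) (ht : t ∈ Icc (-1 : ℝ) 1) :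
    ∑' i : {i : ℤ // 2 * (n : ℤ) + 1 ≤ |i|}, phi ((n : ℝ) * t - (i : ℤ)) ≤
      3 * Real.exp (-(n : ℝ)) := by
  obtain ⟨ht1, ht2⟩ := ht
  have hE : (0:ℝ) < Real.exp 1 := Real.exp_pos _
  have hE' : (0:ℝ) < Real.exp (-1) := Real.exp_pos _
  have hEE : Real.exp 1 * Real.exp (-1) = 1 := by rw [← Real.exp_add]; norm_num
  have hE'lt : Real.exp (-1) < 1 := by
    have := Real.exp_lt_exp.mpr (show (-1:ℝ) < 0 by norm_num)
    rwa [Real.exp_zero] at this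
  set X : ℝ := Real.exp (-(n:ℝ)) with hX
  have hXpos : 0 < X := Real.exp_pos _
  set K : ℝ := Cphi * X with hK
  have hKpos : 0 < K := mul_pos Cphi_pos hXpos
  set g : ℤ → ℝ := fun j => K * Real.exp (-|(j:ℝ)|) with hg
  set e : {i : ℤ // 2 * (n : ℤ) + 1 ≤ |i|} → ℤ :=
    fun i => if 0 ≤ i.1 then i.1 - 2*n else i.1 + 2*n with he
  have hinj : Function.Injective e := by
    rintro ⟨a, ha⟩ ⟨b, hb⟩ hab
    have ha' : 2 * (n:ℤ) + 1 ≤ a ∨ 2 * (n:ℤ) + 1 ≤ -a := le_abs.mp ha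
    have hb' : 2 * (n:ℤ) + 1 ≤ b ∨ 2 * (n:ℤ) + 1 ≤ -b := le_abs.mp hb
    have hab' : (if 0 ≤ a then a - 2*(n:ℤ) else a + 2*(n:ℤ)) =
        (if 0 ≤ b then b - 2*(n:ℤ) else b + 2*(n:ℤ)) := hab
    apply Subtype.ext
    show a = b
    rcases ha' with h1 | h1 <;> rcases hb' with h2 | h2 <;>
      split_ifs at hab' <;> omega
  have hgeo : HasSum (fun k : ℕ => (Real.exp (-1))^k) (1 - Real.exp (-1))⁻¹ :=
    hasSum_geometric_of_lt_one hE'.le hE'lt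
  have hexpk : ∀ k : ℕ, Real.exp (-(k:ℝ)) = (Real.exp (-1))^k := by
    intro k
    rw [← Real.exp_nat_mul]
    norm_num
  have h1 : HasSum (fun k : ℕ => g k) (K * (1 - Real.exp (-1))⁻¹) := by
    have := hgeo.mul_left K
    convert this using 2 with k
    show K * Real.exp (-|((k:ℤ):ℝ)|) = K * Real.exp (-1) ^ k
    rw [Int.cast_natCast, abs_of_nonneg (Nat.cast_nonneg k), hexpk]
    rfl
  have h2 : HasSum (fun k : ℕ => g (-((k:ℤ)+1)))
      (K * Real.exp (-1) * (1 - Real.exp (-1))⁻¹) := by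
    have := hgeo.mul_left (K * Real.exp (-1))
    convert this using 2 with k
    show K * Real.exp (-|(((-((k:ℤ)+1)):ℤ):ℝ)|) = K * Real.exp (-1) * Real.exp (-1) ^ k
    have hc : (((-((k:ℤ)+1)):ℤ):ℝ) = -((k:ℝ)+1) := by push_cast; ring
    rw [hc, abs_of_nonpos (by linarith [Nat.cast_nonneg (α := ℝ) k] : (-((k:ℝ)+1)) ≤ 0),
      neg_neg, show -((k:ℝ)+1) = -(k:ℝ) + -1 by ring, Real.exp_add, hexpk]
    ring
    rfl
  have htot : HasSum g (K * (1 - Real.exp (-1))⁻¹ +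
      K * Real.exp (-1) * (1 - Real.exp (-1))⁻¹) :=
    HasSum.of_nat_of_neg_add_one h1 h2
  have hgsum : Summable g := htot.summable
  have hbound : ∀ i : {i : ℤ // 2 * (n : ℤ) + 1 ≤ |i|},
      phi ((n : ℝ) * t - (i : ℤ)) ≤ g (e i) := by
    rintro ⟨i, hi⟩
    have hnt : |(n:ℝ)*t| ≤ (n:ℝ) := by
      rw [abs_mul, abs_of_nonneg (Nat.cast_nonneg n : (0:ℝ) ≤ (n:ℝ))]
      have h : |t| ≤ 1 := abs_le.mpr ⟨ht1, ht2⟩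
      nlinarith [show (0:ℝ) ≤ (n:ℝ) from Nat.cast_nonneg n]
    have hiabs : |((e ⟨i, hi⟩ : ℤ) : ℝ)| = |(i:ℝ)| - 2*n := by
      rcases le_or_gt 0 i with h0 | h0
      · have hi' : 2*(n:ℤ)+1 ≤ i := by rwa [abs_of_nonneg h0] at hi
        have hi'' : 2*(n:ℝ)+1 ≤ (i:ℝ) := by exact_mod_cast hi'
        simp only [he, if_pos h0]
        push_cast
        rw [abs_of_nonneg (by linarith : (0:ℝ) ≤ (i:ℝ) - 2*(n:ℝ)),
          abs_of_nonneg (by linarith : (0:ℝ) ≤ (i:ℝ))]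
      · have hi' : 2*(n:ℤ)+1 ≤ -i := by rwa [abs_of_neg h0] at hi
        have hi'' : 2*(n:ℝ)+1 ≤ -(i:ℝ) := by exact_mod_cast hi'
        simp only [he, if_neg (not_le.mpr h0)]
        push_cast
        rw [abs_of_nonpos (by linarith : (i:ℝ) + 2*(n:ℝ) ≤ 0),
          abs_of_nonpos (by linarith : (i:ℝ) ≤ 0)]
        ring
    refine (phi_le_abs _).trans ?_
    simp only [hg]
    have habs : |(i:ℝ)| ≤ |(n:ℝ)*t - (i:ℝ)| + |(n:ℝ)*t| := by
      calc |(i:ℝ)| = |((n:ℝ)*t) - ((n:ℝ)*t - (i:ℝ))| := by congr 1; ring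
        _ ≤ |(n:ℝ)*t| + |(n:ℝ)*t - (i:ℝ)| := abs_sub _ _
        _ = |(n:ℝ)*t - (i:ℝ)| + |(n:ℝ)*t| := by ring
    have h3 : (n:ℝ) + |((e ⟨i, hi⟩ : ℤ) : ℝ)| ≤ |(n:ℝ)*t - (i:ℝ)| := by
      rw [hiabs]
      linarith
    calc Cphi * Real.exp (-|(n:ℝ)*t - (i:ℝ)|)
        ≤ Cphi * Real.exp (-(n:ℝ) + -|((e ⟨i, hi⟩ : ℤ) : ℝ)|) := by
          apply mul_le_mul_of_nonneg_left (Real.exp_le_exp.mpr (by linarith)) Cphi_pos.le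
      _ = K * Real.exp (-|((e ⟨i, hi⟩ : ℤ) : ℝ)|) := by
          rw [Real.exp_add, hK, hX]; ring
  have hfsum : Summable (fun i : {i : ℤ // 2 * (n : ℤ) + 1 ≤ |i|} =>
      phi ((n : ℝ) * t - (i : ℤ))) :=
    Summable.of_nonneg_of_le (fun i => phi_nonneg _) hbound (hgsum.comp_injective hinj)
  have h1E : (0:ℝ) < 1 - Real.exp (-1) := by linarith
  calc ∑' i : {i : ℤ // 2 * (n : ℤ) + 1 ≤ |i|}, phi ((n : ℝ) * t - (i : ℤ))
      ≤ ∑' j : ℤ, g j := by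
        refine Summable.tsum_le_tsum_of_inj e hinj (fun c _ => ?_) hbound hfsum hgsum
        exact mul_nonneg hKpos.le (Real.exp_nonneg _)
    _ = K * (1 - Real.exp (-1))⁻¹ + K * Real.exp (-1) * (1 - Real.exp (-1))⁻¹ :=
        htot.tsum_eq
    _ ≤ 3 * X := by
        have heq : K * (1 - Real.exp (-1))⁻¹ + K * Real.exp (-1) * (1 - Real.exp (-1))⁻¹
            = (Cphi * (1 + Real.exp (-1)) / (1 - Real.exp (-1))) * X := by
          rw [hK]; field_simp
        rw [heq]
        have hfrac : Cphi * (1 + Real.exp (-1)) / (1 - Real.exp (-1)) ≤ 3 := by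
          rw [div_le_iff₀ h1E]
          unfold Cphi
          nlinarith [Real.exp_one_gt_d9, Real.exp_one_lt_d9, hE', hEE]
        exact mul_le_mul_of_nonneg_right hfrac hXpos.le
end
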